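/- arXiv:2103.03138 — 2 statements merged into one kernel-verified Lean document; each statement's English description precedes it below -/
import Mathlib

section
/- Let g be a positive integer, let τ be a symmetric g×g complex matrix whose imaginary part is positive definite, let ε, δ ∈ {0,1}^g, and let z ∈ ℂ^g. Then the family (exp(πi (n+ε/2)ᵀτ(n+ε/2) + 2πi (n+ε/2)ᵀ(z+δ/2)))_{n ∈ ℤ^g} is summable (the series defining the theta function with characteristic [ε;δ] converges absolutely). -/
/-!
Write `x = n + ε/2 ∈ ℝ^g` and `Y = Im τ`. The modulus of the summand is
`exp (-π xᵀ Y x - 2π xᵀ Im (z + δ/2))`. Positive definiteness gives `xᵀ Y x ≥ c |x|²` for some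
`c > 0`, and completing the square in each coordinate bounds the summand by a constant times
`∏ᵢ exp (-(π c / 2) xᵢ²)`. This product of shifted one-dimensional Gaussians is summable over `ℤ^g`
because each factor is summable over `ℤ`.
-/

open Complex Real Matrix

open scoped MatrixOrder in
theorem Matrix.PosDef.exists_pos_mul_dotProduct_self_le {n : Type*} [Fintype n] [DecidableEq n]
    {Y : Matrix n n ℝ} (hY : Y.PosDef) :
    ∃ c > 0, ∀ x : n → ℝ, c * (x ⬝ᵥ x) ≤ x ⬝ᵥ Y *ᵥ x := by
  obtain ⟨c, hc, hcY⟩ : ∃ c > 0, algebraMap ℝ (Matrix n n ℝ) c ≤ Y := by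
    cases subsingleton_or_nontrivial (Matrix n n ℝ)
    · exact ⟨1, one_pos, (Subsingleton.elim _ _ : algebraMap ℝ _ 1 = Y).le⟩
    · exact (CFC.exists_pos_algebraMap_le_iff hY.isHermitian).2
        fun _ hx => hY.isStrictlyPositive.spectrum_pos hx
  refine ⟨c, hc, fun x => ?_⟩
  have hsemidef := (le_iff.1 hcY).re_dotProduct_nonneg x
  rw [Algebra.algebraMap_eq_smul_one] at hsemidef
  simpa [sub_mulVec, smul_mulVec] using hsemidef

theorem summable_fin_prod_of_nonneg : ∀ {g : ℕ} {α : Fin g → Type*} (f : ∀ i, α i → ℝ),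
    (∀ i, 0 ≤ f i) → (∀ i, Summable (f i)) → Summable fun n : ∀ i, α i => ∏ i, f i (n i)
  | 0, _, _, _, _ => .of_finite
  | g + 1, α, f, hf, hfs => by
    have hprod := (hfs 0).mul_of_nonneg
      (summable_fin_prod_of_nonneg (fun i => f i.succ) (fun i => hf i.succ) fun i => hfs i.succ)
      (hf 0) fun n => Finset.prod_nonneg fun i _ => hf i.succ (n i)
    refine (Fin.consEquiv α).summable_iff.1 (hprod.congr fun p => ?_)
    simp [Fin.prod_univ_succ]

theorem summable_exp_neg_mul_int_add_sq {a : ℝ} (ha : 0 < a) (v : ℝ) :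
    Summable fun m : ℤ => rexp (-a * (m + v) ^ 2) := by
  refine (HurwitzKernelBounds.summable_f_int 0 v (div_pos ha pi_pos)).congr fun m => ?_
  rw [HurwitzKernelBounds.f_int, pow_zero, one_mul]
  congr 1
  field_simp

theorem neg_mul_sq_sub_two_mul_le {c : ℝ} (hc : 0 < c) (t s : ℝ) :
    -c * t ^ 2 - 2 * t * s ≤ -(c / 2) * t ^ 2 + 2 / c * s ^ 2 := by
  have hsq : 0 ≤ (c * t + 2 * s) ^ 2 / (2 * c) := by positivity
  calc -c * t ^ 2 - 2 * t * s
      = -(c / 2) * t ^ 2 + 2 / c * s ^ 2 - (c * t + 2 * s) ^ 2 / (2 * c) := by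
        field_simp
        ring
    _ ≤ -(c / 2) * t ^ 2 + 2 / c * s ^ 2 := by linarith

theorem re_theta_exponent {ι : Type*} [Fintype ι] (τ : Matrix ι ι ℂ) (w : ι → ℂ) (x : ι → ℝ) :
    ((π : ℂ) * I * (∑ i, ∑ j, (x i : ℂ) * τ i j * x j) + 2 * π * I * ∑ i, (x i : ℂ) * w i).re
      = -π * (x ⬝ᵥ (of fun i j => (τ i j).im) *ᵥ x) - 2 * π * ∑ i, x i * (w i).im := by
  simp [mul_re, mul_im, re_sum, dotProduct, mulVec, Finset.mul_sum, mul_assoc, mul_left_comm]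
  ring

theorem norm_cexp_theta_exponent_le {ι : Type*} [Fintype ι] (τ : Matrix ι ι ℂ) {c : ℝ}
    (hc : 0 < c) (hcτ : ∀ x : ι → ℝ, c * (x ⬝ᵥ x) ≤ x ⬝ᵥ (of fun i j => (τ i j).im) *ᵥ x)
    (w : ι → ℂ) (x : ι → ℝ) :
    ‖cexp (π * I * (∑ i, ∑ j, (x i : ℂ) * τ i j * x j) + 2 * π * I * ∑ i, (x i : ℂ) * w i)‖
      ≤ rexp (2 * π / c * ∑ i, (w i).im ^ 2) * ∏ i, rexp (-(π * c / 2) * x i ^ 2) := by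
  rw [norm_exp, re_theta_exponent, ← Real.exp_sum, ← Real.exp_add]
  gcongr
  calc -π * (x ⬝ᵥ (of fun i j => (τ i j).im) *ᵥ x) - 2 * π * ∑ i, x i * (w i).im
      ≤ -π * (c * (x ⬝ᵥ x)) - 2 * π * ∑ i, x i * (w i).im := by
        linarith [mul_le_mul_of_nonneg_left (hcτ x) pi_pos.le]
    _ = ∑ i, π * (-c * x i ^ 2 - 2 * x i * (w i).im) := by
        simp only [dotProduct, Finset.mul_sum, ← Finset.sum_sub_distrib]
        exact Finset.sum_congr rfl fun i _ => by ring
    _ ≤ ∑ i, π * (-(c / 2) * x i ^ 2 + 2 / c * (w i).im ^ 2) := by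
        gcongr with i
        exact neg_mul_sq_sub_two_mul_le hc _ _
    _ = 2 * π / c * ∑ i, (w i).im ^ 2 + ∑ i, -(π * c / 2) * x i ^ 2 := by
        simp only [Finset.mul_sum, ← Finset.sum_add_distrib]
        exact Finset.sum_congr rfl fun i _ => by ring

theorem theta_char_summable_general (g : ℕ)
    (τ : Matrix (Fin g) (Fin g) ℂ)
    (hpos : (Matrix.of fun i j => (τ i j).im).PosDef)
    (ε δ : Fin g → ℤ)
    (z : Fin g → ℂ) :
    Summable fun n : Fin g → ℤ =>
      Complex.exp ((Real.pi : ℂ) * Complex.I *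
          (∑ i, ∑ j, ((n i : ℂ) + (ε i : ℂ) / 2) * τ i j * ((n j : ℂ) + (ε j : ℂ) / 2))
        + 2 * (Real.pi : ℂ) * Complex.I *
          ∑ i, ((n i : ℂ) + (ε i : ℂ) / 2) * (z i + (δ i : ℂ) / 2)) := by
  obtain ⟨c, hc, hcY⟩ := hpos.exists_pos_mul_dotProduct_self_le
  have hgauss : Summable fun n : Fin g → ℤ => ∏ i, rexp (-(π * c / 2) * (n i + ε i / 2 : ℝ) ^ 2) :=
    summable_fin_prod_of_nonneg (fun i (m : ℤ) => rexp (-(π * c / 2) * (m + ε i / 2 : ℝ) ^ 2))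
      (fun i m => (exp_pos _).le) fun i => summable_exp_neg_mul_int_add_sq (by positivity) _
  have hcast : ∀ (n : Fin g → ℤ) i, (n i : ℂ) + (ε i : ℂ) / 2 = ((n i + ε i / 2 : ℝ) : ℂ) := by
    intro n i
    push_cast
    rfl
  refine (hgauss.mul_left (rexp (2 * π / c * ∑ i, (z i + δ i / 2).im ^ 2))).of_norm_bounded
    fun n => ?_
  simp only [hcast n]
  exact norm_cexp_theta_exponent_le τ hc hcY (fun i => z i + δ i / 2) (fun i => n i + ε i / 2)

/-- For `τ` in the Siegel upper half-space, characteristics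
`ε, δ ∈ {0,1}^g` and any `z ∈ ℂ^g`, the series defining the theta function with
characteristic `[ε;δ]` converges absolutely. -/
theorem theta_char_summable (g : ℕ) (hg : 0 < g)
    (τ : Matrix (Fin g) (Fin g) ℂ) (hsym : τ.IsSymm)
    (hpos : (Matrix.of fun i j => (τ i j).im).PosDef)
    (ε δ : Fin g → ℤ) (hε : ∀ i, ε i = 0 ∨ ε i = 1) (hδ : ∀ i, δ i = 0 ∨ δ i = 1)
    (z : Fin g → ℂ) :
    Summable fun n : Fin g → ℤ =>
      Complex.exp ((Real.pi : ℂ) * Complex.I *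
          (∑ i, ∑ j, ((n i : ℂ) + (ε i : ℂ) / 2) * τ i j * ((n j : ℂ) + (ε j : ℂ) / 2))
        + 2 * (Real.pi : ℂ) * Complex.I *
          ∑ i, ((n i : ℂ) + (ε i : ℂ) / 2) * (z i + (δ i : ℂ) / 2)) :=
  theta_char_summable_general g τ hpos ε δ z
end

section
/- Let g be a positive integer and let τ be a symmetric g×g complex matrix whose imaginary part is positive definite. Then the function z ↦ θ(z,τ) = ∑_{n∈ℤ^g} exp(πi nᵀτn + 2πi nᵀz) is analytic (holomorphic) on all of ℂ^g. -/
/-!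
Write the `n`-th term of the theta series as `a n * exp (L n z)` with `a n = exp (π i nᵀτn)` and
the linear form `L n z = 2π i nᵀz`. Expanding every exponential in its power series turns `θ(·, τ)`
into a double series `∑ₙ ∑ₖ a n (L n z)ᵏ / k!`, and positive definiteness of `Im τ` gives
`‖a n‖ ≤ exp (-π c |n|²)` for some `c > 0`. This Gaussian decay beats
`exp (ρ ‖L n‖) ≤ exp (2πρ ∑ |nᵢ|)` for every `ρ`, so the double series of coefficient norms
converges for every radius and can be summed over `n` first, giving a single power series with
infinite radius of convergence.
-/

open Complex

noncomputable def theta {g : ℕ} (τ : Matrix (Fin g) (Fin g) ℂ) (z : Fin g → ℂ) : ℂ :=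
  ∑' n : Fin g → ℤ,
    Complex.exp ((Real.pi : ℂ) * Complex.I *
        (∑ i, ∑ j, (n i : ℂ) * τ i j * (n j : ℂ))
      + 2 * (Real.pi : ℂ) * Complex.I * ∑ i, (n i : ℂ) * z i)

open Matrix
open scoped NNReal ENNReal Nat

theorem summable_pi_prod_of_nonneg {ι β : Type*} [Fintype ι] {f : ι → β → ℝ}
    (hf : ∀ i, Summable (f i)) (hf₀ : ∀ i b, 0 ≤ f i b) :
    Summable fun x : ι → β => ∏ i, f i (x i) := by
  classical
  refine summable_of_sum_le (c := ∏ i, ∑' b, f i b)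
    (fun x => Finset.prod_nonneg fun i _ => hf₀ i (x i)) fun u => ?_
  calc ∑ x ∈ u, ∏ i, f i (x i)
      ≤ ∑ x ∈ Fintype.piFinset fun i => u.image (· i), ∏ i, f i (x i) :=
        Finset.sum_le_sum_of_subset_of_nonneg
          (fun x hx => Fintype.mem_piFinset.2 fun i => Finset.mem_image_of_mem _ hx)
          fun x _ _ => Finset.prod_nonneg fun i _ => hf₀ i (x i)
    _ = ∏ i, ∑ b ∈ u.image (· i), f i b := (Finset.prod_univ_sum _ _).symm
    _ ≤ ∏ i, ∑' b, f i b :=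
        Finset.prod_le_prod (fun i _ => Finset.sum_nonneg fun b _ => hf₀ i b)
          fun i _ => (hf i).sum_le_tsum _ fun b _ => hf₀ i b

theorem Matrix.PosDef.exists_pos_mul_sum_sq_le {ι : Type*} [Fintype ι] {A : Matrix ι ι ℝ}
    (hA : A.PosDef) : ∃ c > 0, ∀ x : ι → ℝ, c * ∑ i, x i ^ 2 ≤ x ⬝ᵥ A *ᵥ x := by
  have hq : ∀ (t : ℝ) (x : ι → ℝ), (t • x) ⬝ᵥ A *ᵥ (t • x) = t ^ 2 * (x ⬝ᵥ A *ᵥ x) := by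
    intro t x
    simp only [mulVec_smul, smul_dotProduct, dotProduct_smul, smul_eq_mul]
    ring
  obtain ⟨c, hc, hcq⟩ := (isCompact_sphere (0 : EuclideanSpace ℝ ι) 1).exists_forall_le'
    (f := fun y => y.ofLp ⬝ᵥ A *ᵥ y.ofLp) (a := 0) (by fun_prop) fun y hy => by
      have hy₀ : y.ofLp ≠ 0 := fun h => by
        simp [show y = 0 from WithLp.ofLp_injective 2 h] at hy
      simpa using hA.dotProduct_mulVec_pos hy₀
  refine ⟨c, hc, fun x => ?_⟩
  obtain rfl | hx := eq_or_ne x 0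
  · simp
  set y := WithLp.toLp 2 x
  have hy : 0 < ‖y‖ := norm_pos_iff.2 fun h => hx (congrArg WithLp.ofLp h)
  have hnorm : ∑ i, x i ^ 2 = ‖y‖ ^ 2 := by
    simp [y, EuclideanSpace.real_norm_sq_eq]
  have := hcq (‖y‖⁻¹ • y) (by simp [norm_smul, hy.ne'])
  simp only [WithLp.ofLp_smul, hq] at this
  rw [hnorm]
  calc c * ‖y‖ ^ 2 ≤ ‖y‖⁻¹ ^ 2 * (x ⬝ᵥ A *ᵥ x) * ‖y‖ ^ 2 := by gcongr
    _ = x ⬝ᵥ A *ᵥ x := by field_simp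

theorem summable_mul_pow_div_factorial_of_summable_mul_exp {ι : Type*} {u v : ι → ℝ}
    (hu : ∀ i, 0 ≤ u i) (hv : ∀ i, 0 ≤ v i) (h : Summable fun i => u i * Real.exp (v i)) :
    Summable fun q : ι × ℕ => u q.1 * (v q.1 ^ q.2 / q.2 !) := by
  have hfiber : ∀ i, HasSum (fun n : ℕ => u i * (v i ^ n / n !)) (u i * Real.exp (v i)) :=
    fun i => by
      rw [Real.exp_eq_exp_ℝ]
      exact (NormedSpace.expSeries_div_hasSum_exp (𝔸 := ℝ) _).mul_left _
  have hnonneg : ∀ q : ι × ℕ, 0 ≤ u q.1 * (v q.1 ^ q.2 / q.2 !) := fun q =>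
    mul_nonneg (hu _) (div_nonneg (pow_nonneg (hv _) _) (Nat.cast_nonneg _))
  exact (summable_prod_of_nonneg hnonneg).2
    ⟨fun i => (hfiber i).summable, h.congr fun i => (hfiber i).tsum_eq.symm⟩

section

variable {𝕜 E F ι : Type*} [NontriviallyNormedField 𝕜] [NormedAddCommGroup E] [NormedSpace 𝕜 E]
  [NormedAddCommGroup F] [NormedSpace 𝕜 F] [CompleteSpace F]

theorem HasFPowerSeriesOnBall.tsum {f : ι → E → F} {p : ι → FormalMultilinearSeries 𝕜 E F}
    {x : E} {r : ℝ≥0∞} (hf : ∀ i, HasFPowerSeriesOnBall (f i) (p i) x r) (hr : 0 < r)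
    (hp : ∀ ρ : ℝ≥0, ↑ρ < r → Summable fun q : ι × ℕ => ‖p q.1 q.2‖ * (ρ : ℝ) ^ q.2) :
    HasFPowerSeriesOnBall (fun y => ∑' i, f i y) (fun n => ∑' i, p i n) x r := by
  have hcoeff : ∀ n, Summable fun i => ‖p i n‖ := by
    obtain ⟨ρ, hρ₀, hρr⟩ := ENNReal.lt_iff_exists_nnreal_btwn.1 hr
    intro n
    have hρ : (0 : ℝ) < (ρ : ℝ) ^ n := pow_pos (by exact_mod_cast hρ₀) n
    simpa [hρ.ne'] using ((hp ρ hρr).comp_injective (Prod.mk_left_injective n)).div_const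
      ((ρ : ℝ) ^ n)
  have hfiber : ∀ ρ : ℝ≥0, ↑ρ < r →
      Summable fun n => ∑' i, ‖p i n‖ * (ρ : ℝ) ^ n := fun ρ hρ =>
    ((summable_prod_of_nonneg fun _ => by positivity).1 (hp ρ hρ).prod_symm).2
  refine ⟨ENNReal.le_of_forall_nnreal_lt fun ρ hρ => ?_, hr, fun {y} hy => ?_⟩
  · refine (FormalMultilinearSeries.le_radius_of_summable _
      ((hfiber ρ hρ).of_nonneg_of_le (fun _ => by positivity) fun n => ?_))
    rw [tsum_mul_right]
    gcongr
    exact norm_tsum_le_tsum_norm (hcoeff n)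
  · have hyr : (‖y‖₊ : ℝ≥0∞) < r := by simpa [← enorm_eq_nnnorm] using hy
    set T : ι × ℕ → F := fun q => p q.1 q.2 fun _ => y
    have hT : Summable T := (hp _ hyr).of_norm_bounded fun q => by
      simpa using (p q.1 q.2).le_opNorm (fun _ => y)
    have hrow : HasSum (fun i => f i (x + y)) (∑' q, T q) :=
      hT.hasSum.prod_fiberwise fun i => (hf i).hasSum hy
    have hcol : HasSum (fun n => ∑' i, T (i, n)) (∑' q, T q) :=
      ((Equiv.prodComm ℕ ι).hasSum_iff.2 hT.hasSum).prod_fiberwise fun n =>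
        (hT.comp_injective (Prod.mk_left_injective n)).hasSum
    rw [hrow.tsum_eq]
    convert hcol using 2 with n
    exact (ContinuousMultilinearMap.apply 𝕜 _ F fun _ => y).map_tsum
      (Summable.of_norm (hcoeff n))

end

section

variable {E : Type*} [NormedAddCommGroup E] [NormedSpace ℂ E]

theorem hasFPowerSeriesOnBall_const_mul_cexp (a : ℂ) (L : E →L[ℂ] ℂ) :
    HasFPowerSeriesOnBall (fun z => a * cexp (L z))
      (a • (NormedSpace.expSeries ℂ ℂ).compContinuousLinearMap L) 0 ⊤ := by
  have h : HasFPowerSeriesOnBall NormedSpace.exp (NormedSpace.expSeries ℂ ℂ) (L 0) ⊤ := by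
    simpa using NormedSpace.exp_hasFPowerSeriesOnBall
  have := h.compContinuousLinearMap.const_smul (c := a)
  rw [ENNReal.top_div_of_ne_top enorm_ne_top] at this
  rw [Complex.exp_eq_exp_ℂ]
  exact this

theorem norm_smul_expSeries_compContinuousLinearMap_le (a : ℂ) (L : E →L[ℂ] ℂ) (n : ℕ) :
    ‖(a • (NormedSpace.expSeries ℂ ℂ).compContinuousLinearMap L) n‖ ≤ ‖a‖ * (‖L‖ ^ n / n !) := by
  calc ‖a • ((NormedSpace.expSeries ℂ ℂ n).compContinuousLinearMap fun _ => L)‖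
      ≤ ‖a‖ * (‖NormedSpace.expSeries ℂ ℂ n‖ * ∏ _ : Fin n, ‖L‖) := by
        rw [norm_smul]
        gcongr
        exact ContinuousMultilinearMap.norm_compContinuousLinearMap_le _ _
    _ ≤ ‖a‖ * (‖L‖ ^ n / n !) := by
        rw [NormedSpace.expSeries, norm_smul, ContinuousMultilinearMap.norm_mkPiAlgebraFin]
        simp [div_eq_inv_mul]


theorem analyticAt_tsum_mul_cexp {ι : Type*} (a : ι → ℂ) (L : ι → E →L[ℂ] ℂ)
    (h : ∀ ρ : ℝ≥0, Summable fun i => ‖a i‖ * Real.exp (ρ * ‖L i‖)) (z : E) :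
    AnalyticAt ℂ (fun z => ∑' i, a i * cexp (L i z)) z := by
  refine (HasFPowerSeriesOnBall.tsum (fun i => hasFPowerSeriesOnBall_const_mul_cexp (a i) (L i))
    ENNReal.zero_lt_top fun ρ _ => ?_).analyticAt_of_mem (by simp)
  refine (summable_mul_pow_div_factorial_of_summable_mul_exp (v := fun i => ρ * ‖L i‖)
    (fun _ => norm_nonneg _) (fun _ => by positivity) (h ρ)).of_nonneg_of_le
    (fun _ => by positivity) fun q => ?_
  calc ‖(a q.1 • (NormedSpace.expSeries ℂ ℂ).compContinuousLinearMap (L q.1)) q.2‖ * ρ ^ q.2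
      ≤ ‖a q.1‖ * (‖L q.1‖ ^ q.2 / q.2 !) * ρ ^ q.2 := by
        gcongr
        exact norm_smul_expSeries_compContinuousLinearMap_le _ _ _
    _ = ‖a q.1‖ * ((ρ * ‖L q.1‖) ^ q.2 / q.2 !) := by ring

end

section

variable {g : ℕ}

noncomputable def thetaCoeff (τ : Matrix (Fin g) (Fin g) ℂ) (n : Fin g → ℤ) : ℂ :=
  cexp (Real.pi * I * ∑ i, ∑ j, (n i : ℂ) * τ i j * (n j : ℂ))

noncomputable def thetaLinearForm (n : Fin g → ℤ) : (Fin g → ℂ) →L[ℂ] ℂ :=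
  (2 * Real.pi * I : ℂ) • ∑ i, (n i : ℂ) • ContinuousLinearMap.proj i

theorem thetaLinearForm_apply (n : Fin g → ℤ) (z : Fin g → ℂ) :
    thetaLinearForm n z = 2 * Real.pi * I * ∑ i, (n i : ℂ) * z i := by
  simp [thetaLinearForm]

theorem theta_eq_tsum_thetaCoeff_mul_cexp (τ : Matrix (Fin g) (Fin g) ℂ) :
    theta τ = fun z => ∑' n, thetaCoeff τ n * cexp (thetaLinearForm n z) := by
  ext z
  simp only [theta, thetaCoeff, thetaLinearForm_apply, Complex.exp_add]

theorem norm_thetaCoeff (τ : Matrix (Fin g) (Fin g) ℂ) (n : Fin g → ℤ) :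
    ‖thetaCoeff τ n‖ = Real.exp (-Real.pi *
      ((fun i => (n i : ℝ)) ⬝ᵥ (Matrix.of fun i j => (τ i j).im) *ᵥ fun i => (n i : ℝ))) := by
  rw [thetaCoeff, Complex.norm_exp]
  congr 1
  simp [dotProduct, mulVec, Finset.mul_sum, mul_assoc]

theorem norm_thetaLinearForm_le (n : Fin g → ℤ) :
    ‖thetaLinearForm n‖ ≤ 2 * Real.pi * ∑ i, |(n i : ℝ)| := by
  refine ContinuousLinearMap.opNorm_le_bound _ (by positivity) fun z => ?_
  have hcoef : ‖(2 * Real.pi * I : ℂ)‖ = 2 * Real.pi := by simp [Real.pi_pos.le]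
  have hsum : ‖∑ i, (n i : ℂ) * z i‖ ≤ (∑ i, |(n i : ℝ)|) * ‖z‖ := by
    rw [Finset.sum_mul]
    refine (norm_sum_le _ _).trans (Finset.sum_le_sum fun i _ => ?_)
    rw [norm_mul, Complex.norm_intCast]
    gcongr
    exact norm_le_pi_norm z i
  rw [thetaLinearForm_apply, norm_mul, hcoef, mul_assoc (2 * Real.pi)]
  gcongr

theorem summable_norm_thetaCoeff_mul_exp {τ : Matrix (Fin g) (Fin g) ℂ}
    (hpos : (Matrix.of fun i j => (τ i j).im).PosDef) (ρ : ℝ≥0) :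
    Summable fun n => ‖thetaCoeff τ n‖ * Real.exp (ρ * ‖thetaLinearForm n‖) := by
  obtain ⟨c, hc, hcq⟩ := hpos.exists_pos_mul_sum_sq_le
  have hgauss : ∀ _ : Fin g, Summable fun m : ℤ =>
      Real.exp (-Real.pi * (c * (m : ℝ) ^ 2 - 2 * ρ * |(m : ℝ)|)) := fun _ => by
    simpa using summable_pow_mul_jacobiTheta₂_term_bound ρ hc 0
  refine (summable_pi_prod_of_nonneg hgauss fun _ _ => (Real.exp_pos _).le).of_nonneg_of_le
    (fun _ => by positivity) fun n => ?_
  rw [norm_thetaCoeff, ← Real.exp_add, ← Real.exp_sum, Real.exp_le_exp]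
  have hq : Real.pi * (c * ∑ i, (n i : ℝ) ^ 2) ≤ Real.pi *
      ((fun i => (n i : ℝ)) ⬝ᵥ (Matrix.of fun i j => (τ i j).im) *ᵥ fun i => (n i : ℝ)) :=
    mul_le_mul_of_nonneg_left (hcq _) Real.pi_pos.le
  have hL := mul_le_mul_of_nonneg_left (norm_thetaLinearForm_le n) ρ.coe_nonneg
  have hsplit : ∑ i, -Real.pi * (c * (n i : ℝ) ^ 2 - 2 * ρ * |(n i : ℝ)|)
      = -Real.pi * (c * ∑ i, (n i : ℝ) ^ 2) + ρ * (2 * Real.pi * ∑ i, |(n i : ℝ)|) := by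
    simp only [Finset.mul_sum, ← Finset.sum_add_distrib]
    exact Finset.sum_congr rfl fun i _ => by ring
  rw [hsplit]
  linear_combination hq + hL

end

theorem riemann_theta_analytic_general (g : ℕ)
    (τ : Matrix (Fin g) (Fin g) ℂ)
    (hpos : (Matrix.of fun i j => (τ i j).im).PosDef) :
    ∀ z : Fin g → ℂ, AnalyticAt ℂ (theta τ) z := by
  rw [theta_eq_tsum_thetaCoeff_mul_cexp]
  exact analyticAt_tsum_mul_cexp _ _ (summable_norm_thetaCoeff_mul_exp hpos)

/-- For `τ` in the Siegel upper half-space, the Riemann theta function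
`z ↦ θ(z, τ)` is analytic (holomorphic) on all of `ℂ^g`. -/
theorem riemann_theta_analytic (g : ℕ) (hg : 0 < g)
    (τ : Matrix (Fin g) (Fin g) ℂ) (hsym : τ.IsSymm)
    (hpos : (Matrix.of fun i j => (τ i j).im).PosDef) :
    ∀ z : Fin g → ℂ, AnalyticAt ℂ (theta τ) z :=
  riemann_theta_analytic_general g τ hpos
end
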